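/- Let y₁, y₂ ∈ Λ^× with y₁ ≠ −1, set s := val(y₁), fix k₀ ∈ {0, …, n+1}, and set c := val(y₂) + k₀·min(0, s). Define (x, y) by y := y₁ and: if k₀ ≤ n, x_{k₀} := (1+y₁)/y₂, x_{k₀+1} := y₂, and x_j := 1 for j ∉ {k₀, k₀+1}; if k₀ = n+1, x_n := 1/y₂, x_{n+1} := y₂·(1+y₁), and x_j := 1 for j ≤ n−1 (so in both cases ∏_{j=0}^{n+1} x_j = 1 + y and all x_j ∈ Λ^×). Assume either s ≠ 0, or s = 0 and ψ_{k₀−1}(0) < c < ψ_{k₀}(0) (conventions ψ_{−1} = −∞, ψ_{n+1} = +∞). Then F(x, y) = γ(s, c). -/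

import Mathlib

/-- The Novikov field `Λ = ℂ((T^ℝ))`, modeled by Hahn series. -/
abbrev Nov : Type := HahnSeries ℝ ℂ

/-- The additive valuation `val : Λ → ℝ` (the order of a nonzero Hahn series;
junk value at `0`). -/
noncomputable def val (x : Nov) : ℝ := x.order

/-- The `(k+1)`-th *order statistic* of a finite multiset of reals: the entry at index `k`
of the list sorted in nondecreasing order (junk value `0` if `k` is out of range). -/
noncomputable def orderStat (s : Multiset ℝ) (k : ℕ) : ℝ := (s.sort (· ≤ ·)).getD k 0

/-- The map `γ : ℝ² → ℝ^{n+3}`, `γ(s,c) = (γ₀(s,c), …, γ_{n+1}(s,c), s)` where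
`γ_k(s,c) = {c, ψ 0 s, …, ψ n s}_[k]` is the `(k+1)`-th order statistic. -/
noncomputable def gammaMap (n : ℕ) (ψ : Fin (n+1) → ℝ → ℝ) (p : ℝ × ℝ) :
    Fin (n+3) → ℝ :=
  fun i => if (i : ℕ) = n + 2 then p.1
    else orderStat (p.2 ::ₘ Finset.univ.val.map (fun j => ψ j p.1)) (i : ℕ)

/-- The tropically continuous fibration `F` in homogeneous coordinates:
`F_k(x,y) = {Σ_j (j−k)·val(x_j) + k·min(0, val y), ψ 0 (val y), …, ψ n (val y)}_[k]`
for `0 ≤ k ≤ n+1`, and last component `val y`. -/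
noncomputable def Fmap (n : ℕ) (ψ : Fin (n+1) → ℝ → ℝ)
    (x : Fin (n+2) → Nov) (y : Nov) : Fin (n+3) → ℝ :=
  fun i => if (i : ℕ) = n + 2 then val y
    else orderStat
      (((∑ j : Fin (n+2), (((j:ℕ):ℝ) - ((i:ℕ):ℝ)) * val (x j))
          + ((i:ℕ):ℝ) * min 0 (val y))
        ::ₘ Finset.univ.val.map (fun j => ψ j (val y))) (i : ℕ)

/-! Along the `k₀`-th chart, `∑ⱼ (j - r)·val(xⱼ) = (k₀ - r)·val(1 + y₁) + val y₂` for every `r`, so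
the entry inserted among the `ψⱼ` in `F_k` is `c + (k₀ - k)·w` with
`w = val(1 + y₁) - min(0, s) ≥ 0`. If `s ≠ 0` the ultrametric equality gives `w = 0`. If `s = 0`
the shift only pushes the inserted entry further to the side of `ψ_k` on which `c` already
lies strictly (above for `k < k₀`, below for `k > k₀`), which does not change the `k`-th order
statistic. -/

theorem List.Pairwise.getD_eq_of_countP {α : Type*} [LinearOrder α] {l : List α}
    (hl : l.Pairwise (· ≤ ·)) {k : ℕ} {b d : α}
    (hlt : l.countP (· < b) ≤ k) (hle : k < l.countP (· ≤ b)) : l.getD k d = b := by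
  induction l generalizing k with
  | nil => simp at hle
  | cons x xs ih =>
    rw [List.pairwise_cons] at hl
    simp only [List.countP_cons, decide_eq_true_eq] at hlt hle
    cases k with
    | zero =>
      have hxb : x ≤ b := by
        by_contra hbx
        have : xs.countP (· ≤ b) = 0 := List.countP_eq_zero.2 fun t ht htb =>
          hbx ((hl.1 t ht).trans (of_decide_eq_true htb))
        rw [if_neg hbx] at hle; omega
      have : ¬ x < b := fun h => by rw [if_pos h] at hlt; omega
      exact le_antisymm hxb (not_lt.1 this)
    | succ k =>
      refine ih hl.2 ?_ (by split_ifs at hle <;> omega)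
      by_cases hxb : x < b
      · simp only [hxb, if_true] at hlt; omega
      · have : xs.countP (· < b) = 0 := List.countP_eq_zero.2 fun t ht htb =>
          hxb ((hl.1 t ht).trans_lt (of_decide_eq_true htb))
        omega

theorem orderStat_eq_of_countP {m : Multiset ℝ} {k : ℕ} {b : ℝ}
    (hlt : m.countP (· < b) ≤ k) (hle : k < m.countP (· ≤ b)) : orderStat m k = b := by
  have h := (Multiset.pairwise_sort m (· ≤ ·)).getD_eq_of_countP (k := k) (b := b) (d := 0)
  rw [← Multiset.coe_countP, ← Multiset.coe_countP, Multiset.sort_eq] at h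
  exact h hlt hle

section OrderStatCons

variable {m : ℕ} {φ : Fin m → ℝ}

theorem StrictMono.countP_lt_map_univ (hφ : StrictMono φ) (j : Fin m) :
    (Finset.univ.val.map φ).countP (· < φ j) = j := by
  rw [Multiset.countP_map, ← Finset.filter_val, Finset.card_val]
  simp_rw [hφ.lt_iff_lt]
  simp [Finset.filter_gt_eq_Iio]

theorem StrictMono.countP_le_map_univ (hφ : StrictMono φ) (j : Fin m) :
    (Finset.univ.val.map φ).countP (· ≤ φ j) = j + 1 := by
  rw [Multiset.countP_map, ← Finset.filter_val, Finset.card_val]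
  simp_rw [hφ.le_iff_le]
  simp [Finset.filter_ge_eq_Iic]

theorem StrictMono.orderStat_cons_map_of_lt (hφ : StrictMono φ) {a : ℝ} {j : Fin m}
    (h : φ j < a) : orderStat (a ::ₘ Finset.univ.val.map φ) j = φ j := by
  apply orderStat_eq_of_countP <;>
    simp only [Multiset.countP_cons, hφ.countP_lt_map_univ, hφ.countP_le_map_univ,
      if_neg (not_lt.2 h.le), if_neg (not_le.2 h)] <;> omega

theorem StrictMono.orderStat_cons_map_of_gt (hφ : StrictMono φ) {a : ℝ} {j : Fin m}
    (h : a < φ j) : orderStat (a ::ₘ Finset.univ.val.map φ) (j + 1) = φ j := by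
  apply orderStat_eq_of_countP <;>
    simp only [Multiset.countP_cons, hφ.countP_lt_map_univ, hφ.countP_le_map_univ,
      if_pos h, if_pos h.le] <;> omega

end OrderStatCons

theorem StrictMono.orderStat_cons_map_add_mul {n : ℕ} {φ : Fin (n+1) → ℝ} (hφ : StrictMono φ)
    {k₀ i : Fin (n+2)} {c w : ℝ} (hw : 0 ≤ w)
    (hlt : ∀ j : Fin (n+1), (j:ℕ) < (k₀:ℕ) → φ j < c)
    (hgt : ∀ j : Fin (n+1), (k₀:ℕ) ≤ (j:ℕ) → c < φ j) :
    orderStat ((c + (((k₀:ℕ):ℝ) - ((i:ℕ):ℝ)) * w) ::ₘ Finset.univ.val.map φ) i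
      = orderStat (c ::ₘ Finset.univ.val.map φ) i := by
  rcases lt_trichotomy (i:ℕ) k₀ with hik | hik | hik
  · have hc := hlt ⟨i, by omega⟩ hik
    have hshift : c ≤ c + (((k₀:ℕ):ℝ) - ((i:ℕ):ℝ)) * w :=
      le_add_of_nonneg_right (mul_nonneg (sub_nonneg.2 (by exact_mod_cast hik.le)) hw)
    exact (hφ.orderStat_cons_map_of_lt (hc.trans_le hshift)).trans
      (hφ.orderStat_cons_map_of_lt hc).symm
  · rw [hik, sub_self, zero_mul, add_zero]
  · obtain ⟨j, hj⟩ : ∃ j : Fin (n+1), (i:ℕ) = j + 1 := ⟨⟨i - 1, by omega⟩, by simp; omega⟩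
    have hc := hgt j (by omega)
    have hshift : c + (((k₀:ℕ):ℝ) - ((i:ℕ):ℝ)) * w ≤ c :=
      add_le_of_nonpos_right (mul_nonpos_of_nonpos_of_nonneg
        (sub_nonpos.2 (by exact_mod_cast hik.le)) hw)
    have hshifted := hφ.orderStat_cons_map_of_gt (hshift.trans_lt hc)
    have hunshifted := hφ.orderStat_cons_map_of_gt hc
    rw [← hj] at hshifted hunshifted
    rw [hshifted, hunshifted]

theorem addVal_eq_val {x : Nov} (hx : x ≠ 0) : HahnSeries.addVal ℝ ℂ x = val x :=
  HahnSeries.addVal_apply_of_ne hx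

theorem val_one : val 1 = 0 := HahnSeries.order_one

theorem val_mul {x y : Nov} (hx : x ≠ 0) (hy : y ≠ 0) : val (x * y) = val x + val y :=
  HahnSeries.order_mul hx hy

theorem val_div {x y : Nov} (hx : x ≠ 0) (hy : y ≠ 0) : val (x / y) = val x - val y := by
  have h := AddValuation.map_div (HahnSeries.addVal ℝ ℂ) (x := x) (y := y)
  rw [addVal_eq_val (div_ne_zero hx hy), addVal_eq_val hx, addVal_eq_val hy] at h
  exact_mod_cast h

theorem val_zero : val 0 = 0 := HahnSeries.order_zero

theorem min_zero_val_le_val_one_add {y : Nov} (h1y : 1 + y ≠ 0) :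
    min 0 (val y) ≤ val (1 + y) := by
  rcases eq_or_ne y 0 with rfl | hy
  · simp [val_zero, val_one]
  have h := AddValuation.map_add (HahnSeries.addVal ℝ ℂ) 1 y
  rw [addVal_eq_val one_ne_zero, addVal_eq_val hy, addVal_eq_val h1y, val_one] at h
  exact_mod_cast h

theorem val_one_add_of_val_ne_zero {y : Nov} (h1y : 1 + y ≠ 0) (hs : val y ≠ 0) :
    val (1 + y) = min 0 (val y) := by
  have hy : y ≠ 0 := by rintro rfl; exact hs val_zero
  have h := AddValuation.map_add_of_distinct_val (HahnSeries.addVal ℝ ℂ) (x := 1) (y := y)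
  rw [addVal_eq_val one_ne_zero, addVal_eq_val hy, addVal_eq_val h1y, val_one] at h
  exact_mod_cast h (by exact_mod_cast hs.symm)

section MulSingle

variable {ι : Type*} [DecidableEq ι]

theorem Pi.mulSingle_apply_ne_zero {M : Type*} [One M] [Zero M] [NeZero (1 : M)] {u : M}
    (hu : u ≠ 0) (a j : ι) : (Pi.mulSingle a u : ι → M) j ≠ 0 := by
  rw [Pi.mulSingle_apply]; split_ifs <;> simp [hu]

theorem val_mulSingle (a : ι) (u : Nov) (j : ι) :
    val ((Pi.mulSingle a u : ι → Nov) j) = (Pi.single a (val u) : ι → ℝ) j := by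
  rcases eq_or_ne j a with rfl | h <;> simp [*, val_one]

theorem sum_mul_val_mulSingle_mul_mulSingle [Fintype ι] {a b : ι} {u v : Nov} (hu : u ≠ 0)
    (hv : v ≠ 0) (f : ι → ℝ) :
    ∑ j, f j * val ((Pi.mulSingle a u * Pi.mulSingle b v : ι → Nov) j)
      = f a * val u + f b * val v := by
  simp [val_mul (Pi.mulSingle_apply_ne_zero hu a _) (Pi.mulSingle_apply_ne_zero hv b _),
    val_mulSingle, mul_add, Finset.sum_add_distrib, Pi.single_apply]

end MulSingle

/-- The `k₀`-th chart embedding `g_{k₀}(y₁, y₂)` in homogeneous coordinates. -/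
noncomputable def chartEmbedding (n : ℕ) (y₁ y₂ : Nov) (k₀ : Fin (n+2)) : Fin (n+2) → Nov :=
  fun j : Fin (n+2) =>
    if (k₀:ℕ) ≤ n then
      (if (j:ℕ) = (k₀:ℕ) then (1 + y₁) / y₂
       else if (j:ℕ) = (k₀:ℕ) + 1 then y₂ else 1)
    else
      (if (j:ℕ) = n then 1 / y₂
       else if (j:ℕ) = n + 1 then y₂ * (1 + y₁) else 1)

section ChartEmbedding

variable {n : ℕ} {y₁ y₂ : Nov}

theorem chartEmbedding_castSucc (k : Fin (n+1)) :
    chartEmbedding n y₁ y₂ k.castSucc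
      = Pi.mulSingle k.castSucc ((1 + y₁) / y₂) * Pi.mulSingle k.succ y₂ := by
  funext j
  simp only [chartEmbedding, Pi.mul_apply, Pi.mulSingle_apply, Fin.ext_iff, Fin.val_castSucc,
    Fin.val_succ, k.is_le, if_true]
  split_ifs <;> first | omega | simp

theorem chartEmbedding_last :
    chartEmbedding n y₁ y₂ (Fin.last (n+1))
      = Pi.mulSingle (Fin.last n).castSucc (1 / y₂)
        * Pi.mulSingle (Fin.last (n+1)) (y₂ * (1 + y₁)) := by
  funext j
  simp only [chartEmbedding, Pi.mul_apply, Pi.mulSingle_apply, Fin.ext_iff, Fin.val_castSucc,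
    Fin.val_last, Nat.not_succ_le_self, if_false]
  split_ifs <;> first | omega | simp

theorem chartEmbedding_apply_ne_zero (hy₂ : y₂ ≠ 0) (h1y : 1 + y₁ ≠ 0) (k₀ j : Fin (n+2)) :
    chartEmbedding n y₁ y₂ k₀ j ≠ 0 := by
  induction k₀ using Fin.lastCases with
  | cast k =>
    rw [chartEmbedding_castSucc]
    exact mul_ne_zero (Pi.mulSingle_apply_ne_zero (div_ne_zero h1y hy₂) _ _)
      (Pi.mulSingle_apply_ne_zero hy₂ _ _)
  | last =>
    rw [chartEmbedding_last]
    exact mul_ne_zero (Pi.mulSingle_apply_ne_zero (one_div_ne_zero hy₂) _ _)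
      (Pi.mulSingle_apply_ne_zero (mul_ne_zero hy₂ h1y) _ _)

theorem prod_chartEmbedding (hy₂ : y₂ ≠ 0) (k₀ : Fin (n+2)) :
    ∏ j, chartEmbedding n y₁ y₂ k₀ j = 1 + y₁ := by
  induction k₀ using Fin.lastCases with
  | cast k =>
    simp only [chartEmbedding_castSucc, Pi.mul_apply, Finset.prod_mul_distrib,
      Fintype.prod_pi_mulSingle']
    exact div_mul_cancel₀ _ hy₂
  | last =>
    simp only [chartEmbedding_last, Pi.mul_apply, Finset.prod_mul_distrib,
      Fintype.prod_pi_mulSingle']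
    rw [one_div, inv_mul_cancel_left₀ hy₂]

theorem sum_sub_mul_val_chartEmbedding (hy₂ : y₂ ≠ 0) (h1y : 1 + y₁ ≠ 0) (k₀ : Fin (n+2))
    (r : ℝ) :
    ∑ j : Fin (n+2), (((j:ℕ):ℝ) - r) * val (chartEmbedding n y₁ y₂ k₀ j)
      = (((k₀:ℕ):ℝ) - r) * val (1 + y₁) + val y₂ := by
  induction k₀ using Fin.lastCases with
  | cast k =>
    rw [chartEmbedding_castSucc, sum_mul_val_mulSingle_mul_mulSingle (div_ne_zero h1y hy₂) hy₂,
      val_div h1y hy₂]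
    simp only [Fin.val_castSucc, Fin.val_succ, Nat.cast_add, Nat.cast_one]
    ring
  | last =>
    rw [chartEmbedding_last, sum_mul_val_mulSingle_mul_mulSingle (one_div_ne_zero hy₂)
      (mul_ne_zero hy₂ h1y), val_div one_ne_zero hy₂, val_one, val_mul hy₂ h1y]
    simp only [Fin.val_castSucc, Fin.val_last, Nat.cast_add, Nat.cast_one]
    ring

end ChartEmbedding

theorem Fmap_chart_eq_gamma_general (n : ℕ) (ψ : Fin (n+1) → ℝ → ℝ)
    (hord : ∀ s : ℝ, StrictMono fun j => ψ j s)
    (y₁ y₂ : Nov) (hy₂ : y₂ ≠ 0) (hy₁' : y₁ ≠ -1)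
    (k₀ : Fin (n+2)) (s c : ℝ) (hs : s = val y₁)
    (hc : c = val y₂ + ((k₀:ℕ):ℝ) * min 0 s)
    (x : Fin (n+2) → Nov)
    (hx : x = fun j : Fin (n+2) =>
      if (k₀:ℕ) ≤ n then
        (if (j:ℕ) = (k₀:ℕ) then (1 + y₁) / y₂
         else if (j:ℕ) = (k₀:ℕ) + 1 then y₂ else 1)
      else
        (if (j:ℕ) = n then 1 / y₂
         else if (j:ℕ) = n + 1 then y₂ * (1 + y₁) else 1))
    (hreg : s ≠ 0 ∨ (s = 0 ∧
      (∀ j : Fin (n+1), (j:ℕ) < (k₀:ℕ) → ψ j 0 < c) ∧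
      (∀ j : Fin (n+1), (k₀:ℕ) ≤ (j:ℕ) → c < ψ j 0))) :
    (∀ j, x j ≠ 0) ∧ (∏ j, x j) = 1 + y₁ ∧
    Fmap n ψ x y₁ = gammaMap n ψ (s, c) := by
  have h1y : 1 + y₁ ≠ 0 := fun h => hy₁' (eq_neg_of_add_eq_zero_right h)
  obtain rfl : x = chartEmbedding n y₁ y₂ k₀ := hx
  refine ⟨chartEmbedding_apply_ne_zero hy₂ h1y k₀, prod_chartEmbedding hy₂ k₀, ?_⟩
  subst hs
  funext i
  induction i using Fin.lastCases with
  | last => simp [Fmap, gammaMap]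
  | cast i =>
    have hi : (i:ℕ) ≠ n + 2 := by omega
    simp only [Fmap, gammaMap, Fin.val_castSucc, hi, if_false,
      sum_sub_mul_val_chartEmbedding hy₂ h1y]
    have hinserted :
        (((k₀:ℕ):ℝ) - ((i:ℕ):ℝ)) * val (1 + y₁) + val y₂ + ((i:ℕ):ℝ) * min 0 (val y₁)
          = c + (((k₀:ℕ):ℝ) - ((i:ℕ):ℝ)) * (val (1 + y₁) - min 0 (val y₁)) := by
      rw [hc]; ring
    rw [hinserted]
    rcases hreg with hs | ⟨hs, hlt, hgt⟩
    · rw [val_one_add_of_val_ne_zero h1y hs, sub_self, mul_zero, add_zero]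
    · have hw := sub_nonneg.2 (min_zero_val_le_val_one_add h1y)
      rw [hs] at hw ⊢
      exact (hord 0).orderStat_cons_map_add_mul hw hlt hgt

/-- Let `y₁, y₂ ∈ Λ^×` with `y₁ ≠ −1`, `s := val y₁`, `k₀ ∈ {0,…,n+1}`
and `c := val y₂ + k₀·min(0,s)`, and let `(x, y₁)` be the `k₀`-th chart embedding in
homogeneous coordinates.  If `s ≠ 0`, or `s = 0` and `ψ (k₀−1) 0 < c < ψ k₀ 0` (with the
conventions `ψ₋₁ = −∞`, `ψ_{n+1} = +∞`), then all `x j` are invertible,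
`∏_j x_j = 1 + y₁`, and `F(x, y₁) = γ(s, c)`. -/
theorem Fmap_chart_eq_gamma (n : ℕ) (ψ : Fin (n+1) → ℝ → ℝ)
    (hord : ∀ s : ℝ, StrictMono fun j => ψ j s)
    (y₁ y₂ : Nov) (hy₁ : y₁ ≠ 0) (hy₂ : y₂ ≠ 0) (hy₁' : y₁ ≠ -1)
    (k₀ : Fin (n+2)) (s c : ℝ) (hs : s = val y₁)
    (hc : c = val y₂ + ((k₀:ℕ):ℝ) * min 0 s)
    (x : Fin (n+2) → Nov)
    (hx : x = fun j : Fin (n+2) =>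
      if (k₀:ℕ) ≤ n then
        (if (j:ℕ) = (k₀:ℕ) then (1 + y₁) / y₂
         else if (j:ℕ) = (k₀:ℕ) + 1 then y₂ else 1)
      else
        (if (j:ℕ) = n then 1 / y₂
         else if (j:ℕ) = n + 1 then y₂ * (1 + y₁) else 1))
    (hreg : s ≠ 0 ∨ (s = 0 ∧
      (∀ j : Fin (n+1), (j:ℕ) < (k₀:ℕ) → ψ j 0 < c) ∧
      (∀ j : Fin (n+1), (k₀:ℕ) ≤ (j:ℕ) → c < ψ j 0))) :
    (∀ j, x j ≠ 0) ∧ (∏ j, x j) = 1 + y₁ ∧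
    Fmap n ψ x y₁ = gammaMap n ψ (s, c) :=
  Fmap_chart_eq_gamma_general n ψ hord y₁ y₂ hy₂ hy₁' k₀ s c hs hc x hx hreg
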